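/- arXiv:1803.03696 — 2 statements merged into one kernel-verified Lean document; each statement's English description precedes it below -/
import Mathlib

section
/- Let G be a finite simple 2-edge-connected graph and let T be a set of vertices of G with |T| even. Then G has a T-join J with 2|J| ≤ |E(G)|. -/
open SimpleGraph Set

variable {V : Type*}

/-- `J` is a `T`-join of `G`: a set of edges of `G` such that a vertex has odd degree
in the spanning subgraph with edge set `J` iff it belongs to `T`. -/
def IsTJoin (G : SimpleGraph V) (T : Set V) (J : Set (Sym2 V)) : Prop :=
  J ⊆ G.edgeSet ∧ ∀ v : V, (Odd {e ∈ J | v ∈ e}.ncard ↔ v ∈ T)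

/-- The edge set of the maximal bridgeless subgraph of `G`: all non-bridge edges. -/
def nonBridgeEdges (G : SimpleGraph V) : Set (Sym2 V) :=
  {e ∈ G.edgeSet | ¬ G.IsBridge e}

/-- A graph is 2-edge-connected if it is connected, has at least two vertices,
and has no bridge. -/
def TwoEdgeConnected (G : SimpleGraph V) : Prop :=
  G.Connected ∧ Nontrivial V ∧ ∀ e, ¬ G.IsBridge e

/-- `H` is the edge set of an even subgraph of `G`: every vertex has even degree. -/
def IsEvenEdgeSet (G : SimpleGraph V) (H : Set (Sym2 V)) : Prop :=
  H ⊆ G.edgeSet ∧ ∀ v : V, Even {e ∈ H | v ∈ e}.ncard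

/-! Signed graphs: a signature is `σ : Sym2 V → Bool`, `σ e = true` meaning `e` is negative. -/

/-- The set of negative edges of `(G, σ)`. -/
def negEdgeSet (G : SimpleGraph V) (σ : Sym2 V → Bool) : Set (Sym2 V) :=
  {e ∈ G.edgeSet | σ e = true}

/-- The set of positive edges of `(G, σ)`. -/
def posEdgeSet (G : SimpleGraph V) (σ : Sym2 V → Bool) : Set (Sym2 V) :=
  {e ∈ G.edgeSet | σ e = false}

/-- `G⁺`: the spanning subgraph of `G` on the positive edges. -/
def gplus (G : SimpleGraph V) (σ : Sym2 V → Bool) : SimpleGraph V :=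
  G.deleteEdges {e | σ e = true}

/-- `C` is the edge set and `S` the vertex set of a cycle of `G`. -/
def IsCycleSet (G : SimpleGraph V) (C : Set (Sym2 V)) (S : Set V) : Prop :=
  ∃ (v : V) (w : G.Walk v v), w.IsCycle ∧ C = {e | e ∈ w.edges} ∧ S = {x | x ∈ w.support}

/-- `C` (with vertex set `S`) is a negative cycle: it has an odd number of negative edges. -/
def IsNegCycle (G : SimpleGraph V) (σ : Sym2 V → Bool) (C : Set (Sym2 V)) (S : Set V) : Prop :=
  IsCycleSet G C S ∧ Odd {e ∈ C | σ e = true}.ncard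

/-- `C` is (the edge set of) a positive cycle: it has an even number of negative edges. -/
def IsPosCycle (G : SimpleGraph V) (σ : Sym2 V → Bool) (C : Set (Sym2 V)) : Prop :=
  (∃ S, IsCycleSet G C S) ∧ Even {e ∈ C | σ e = true}.ncard

/-- `B` is a short barbell whose two negative cycles have edge sets `C₁` and `C₂`:
the two negative cycles meet in exactly one vertex. -/
def IsShortBarbellWith (G : SimpleGraph V) (σ : Sym2 V → Bool)
    (B C₁ C₂ : Set (Sym2 V)) : Prop :=
  ∃ S₁ S₂, IsNegCycle G σ C₁ S₁ ∧ IsNegCycle G σ C₂ S₂ ∧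
    (∃ v, S₁ ∩ S₂ = {v}) ∧ B = C₁ ∪ C₂

/-- `B` is a long barbell whose two negative cycles have edge sets `C₁` and `C₂`:
two vertex-disjoint negative cycles joined by a path meeting them only in its endpoints. -/
def IsLongBarbellWith (G : SimpleGraph V) (σ : Sym2 V → Bool)
    (B C₁ C₂ : Set (Sym2 V)) : Prop :=
  ∃ (S₁ S₂ : Set V) (u v : V) (p : G.Walk u v), IsNegCycle G σ C₁ S₁ ∧ IsNegCycle G σ C₂ S₂ ∧
    Disjoint S₁ S₂ ∧ p.IsPath ∧ u ∈ S₁ ∧ v ∈ S₂ ∧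
    {x | x ∈ p.support} ∩ S₁ = {u} ∧ {x | x ∈ p.support} ∩ S₂ = {v} ∧
    B = C₁ ∪ C₂ ∪ {e | e ∈ p.edges}

/-- `B` is a barbell whose two negative cycles have edge sets `C₁` and `C₂`. -/
def IsBarbellWith (G : SimpleGraph V) (σ : Sym2 V → Bool) (B C₁ C₂ : Set (Sym2 V)) : Prop :=
  IsShortBarbellWith G σ B C₁ C₂ ∨ IsLongBarbellWith G σ B C₁ C₂

/-- `B` is (the edge set of) a barbell of `(G, σ)`. -/
def IsBarbell (G : SimpleGraph V) (σ : Sym2 V → Bool) (B : Set (Sym2 V)) : Prop :=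
  ∃ C₁ C₂, IsBarbellWith G σ B C₁ C₂

/-- A signed-circuit is a positive cycle or a barbell. -/
def IsSignedCircuit (G : SimpleGraph V) (σ : Sym2 V → Bool) (D : Set (Sym2 V)) : Prop :=
  IsPosCycle G σ D ∨ IsBarbell G σ D

open Classical in
/-- `τ(G,σ)`: `|E(G)|` if there is no barbell, otherwise the minimum over all barbells of
the total number of edges of its two negative cycles. -/
noncomputable def tau (G : SimpleGraph V) (σ : Sym2 V → Bool) : ℕ :=
  if ∃ B, IsBarbell G σ B then
    sInf {n | ∃ B C₁ C₂, IsBarbellWith G σ B C₁ C₂ ∧ n = C₁.ncard + C₂.ncard}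
  else G.edgeSet.ncard

/-- The length of a family of signed-circuits (counted with multiplicity). -/
noncomputable def circuitLength (𝓕 : Multiset (Set (Sym2 V))) : ℕ := (𝓕.map Set.ncard).sum

/-- `𝓕` is a signed-circuit cover of `(G, σ)`. -/
def IsSignedCircuitCover (G : SimpleGraph V) (σ : Sym2 V → Bool)
    (𝓕 : Multiset (Set (Sym2 V))) : Prop :=
  (∀ C ∈ 𝓕, IsSignedCircuit G σ C) ∧ ∀ e ∈ G.edgeSet, ∃ C ∈ 𝓕, e ∈ C

/-- `e` has exactly one endpoint in `U`. -/
def Crosses (U : Set V) (e : Sym2 V) : Prop :=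
  ∃ x y, e = s(x, y) ∧ x ∈ U ∧ y ∉ U

open Classical in
/-- The signature obtained from `σ` by switching at the vertex set `U`. -/
noncomputable def switchSign (σ : Sym2 V → Bool) (U : Set V) : Sym2 V → Bool :=
  fun e => if Crosses U e then !(σ e) else σ e

/-- Two signatures are equivalent if one is obtained from the other by switching. -/
def EquivSign (σ σ' : Sym2 V → Bool) : Prop := ∃ U : Set V, σ' = switchSign σ U

/-- The minimum number of negative edges lying entirely inside `W`, over all signatures
equivalent to `σ` (the negativeness of the signed subgraph induced on `W`). -/
noncomputable def negOn (G : SimpleGraph V) (σ : Sym2 V → Bool) (W : Set V) : ℕ :=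
  sInf {n | ∃ U : Set V,
    n = {e | e ∈ G.edgeSet ∧ (∀ x ∈ e, x ∈ W) ∧ switchSign σ U e = true}.ncard}

/-- The negativeness `ε(G,σ)`. -/
noncomputable def negativeness (G : SimpleGraph V) (σ : Sym2 V → Bool) : ℕ :=
  negOn G σ Set.univ

/-- The signed subgraph induced on `W` is balanced. -/
def BalancedOn (G : SimpleGraph V) (σ : Sym2 V → Bool) (W : Set V) : Prop :=
  negOn G σ W = 0

/-- `(G, σ)` is flow-admissible: each connected component has negativeness ≠ 1, and
for every bridge, neither of the two components obtained by deleting it is balanced. -/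
def FlowAdmissible (G : SimpleGraph V) (σ : Sym2 V → Bool) : Prop :=
  ∀ x : V,
    negOn G σ {y | G.Reachable x y} ≠ 1 ∧
    ∀ e ∈ G.edgeSet, G.IsBridge e → (∀ z ∈ e, G.Reachable x z) →
      ∀ z ∈ e, ¬ BalancedOn G σ {y | (G.deleteEdges {e}).Reachable z y}

/-- `{e, f}` is a 2-edge-cut of `G`. -/
def IsTwoEdgeCut (G : SimpleGraph V) (e f : Sym2 V) : Prop :=
  e ∈ G.edgeSet ∧ f ∈ G.edgeSet ∧ e ≠ f ∧ ¬ G.IsBridge e ∧ ¬ G.IsBridge f ∧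
    ¬ (G.deleteEdges {e, f}).Connected

/-!
Even edge sets are closed under symmetric difference, and translating a `T`-join by an even set
gives again a `T`-join. In a bridgeless graph every edge lies on a cycle, so translation by that
cycle shows that each edge lies in exactly half of the translates `J ∆ H` of a fixed `T`-join `J`.
Hence the average of `|J ∆ H|` over all even sets `H` is `|E(G)| / 2`, and some translate is no
larger than the average. A first `T`-join is obtained by pairing up the vertices of `T` and adding
paths between the pairs modulo 2.
-/

open scoped symmDiff

theorem Finset.two_mul_card_filter_mem_symmDiff {α : Type*} [DecidableEq α]
    {𝓗 : Finset (Finset α)} (h𝓗 : ∀ H ∈ 𝓗, ∀ K ∈ 𝓗, H ∆ K ∈ 𝓗) {H₀ : Finset α}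
    (hH₀ : H₀ ∈ 𝓗) {a : α} (ha : a ∈ H₀) (J : Finset α) :
    2 * {H ∈ 𝓗 | a ∈ J ∆ H}.card = 𝓗.card := by
  have hflip : ∀ H, a ∈ J ∆ (H ∆ H₀) ↔ a ∉ J ∆ H := fun H => by
    rw [← symmDiff_assoc, Finset.mem_symmDiff (t := H₀)]
    tauto
  have hswap : {H ∈ 𝓗 | a ∈ J ∆ H}.card = {H ∈ 𝓗 | a ∉ J ∆ H}.card := by
    refine Finset.card_bij' (fun H _ => H ∆ H₀) (fun H _ => H ∆ H₀) ?_ ?_ ?_ ?_ <;>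
      simp only [Finset.mem_filter]
    · exact fun H hH => ⟨h𝓗 H hH.1 H₀ hH₀, fun h => (hflip H).mp h hH.2⟩
    · exact fun H hH => ⟨h𝓗 H hH.1 H₀ hH₀, (hflip H).mpr hH.2⟩
    · exact fun H _ => symmDiff_symmDiff_cancel_right H₀ H
    · exact fun H _ => symmDiff_symmDiff_cancel_right H₀ H
  have := Finset.card_filter_add_card_filter_not (s := 𝓗) (fun H => a ∈ J ∆ H)
  omega

theorem Finset.exists_two_mul_card_symmDiff_le {α : Type*} [DecidableEq α]
    {𝓗 : Finset (Finset α)} {E J : Finset α} (hne : 𝓗.Nonempty)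
    (h𝓗 : ∀ H ∈ 𝓗, ∀ K ∈ 𝓗, H ∆ K ∈ 𝓗) (hsub : ∀ H ∈ 𝓗, H ⊆ E)
    (hcover : ∀ a ∈ E, ∃ H ∈ 𝓗, a ∈ H) (hJ : J ⊆ E) :
    ∃ H ∈ 𝓗, 2 * (J ∆ H).card ≤ E.card := by
  refine Finset.exists_le_of_sum_le hne (le_of_eq ?_)
  have hrows : ∀ H ∈ 𝓗, E.bipartiteAbove (fun H a => a ∈ J ∆ H) H = J ∆ H := fun H hH =>
    Finset.filter_mem_eq_inter.trans
      (Finset.inter_eq_right.mpr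
        (Finset.symmDiff_subset_union.trans (Finset.union_subset hJ (hsub H hH))))
  have hcols : ∀ a ∈ E, 2 * (𝓗.bipartiteBelow (fun H a => a ∈ J ∆ H) a).card = 𝓗.card :=
    fun a ha => by
      obtain ⟨H₀, hH₀, haH₀⟩ := hcover a ha
      exact Finset.two_mul_card_filter_mem_symmDiff h𝓗 hH₀ haH₀ J
  calc ∑ H ∈ 𝓗, 2 * (J ∆ H).card
      = 2 * ∑ H ∈ 𝓗, (E.bipartiteAbove (fun H a => a ∈ J ∆ H) H).card := by
        rw [Finset.mul_sum]; exact Finset.sum_congr rfl fun H hH => by rw [hrows H hH]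
    _ = ∑ a ∈ E, 2 * (𝓗.bipartiteBelow (fun H a => a ∈ J ∆ H) a).card := by
        rw [Finset.sum_card_bipartiteAbove_eq_sum_card_bipartiteBelow, Finset.mul_sum]
    _ = ∑ H ∈ 𝓗, E.card := by
        rw [Finset.sum_congr rfl hcols, Finset.sum_const, Finset.sum_const, smul_eq_mul,
          smul_eq_mul, mul_comm]

theorem Set.odd_ncard_symmDiff_iff {α : Type*} {s t : Set α} (hs : s.Finite) (ht : t.Finite) :
    Odd (s ∆ t).ncard ↔ (Odd s.ncard ↔ Even t.ncard) := by
  have hsub : s ∩ t ⊆ s ∪ t := Set.inter_subset_left.trans Set.subset_union_left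
  have hcount : (s ∆ t).ncard + 2 * (s ∩ t).ncard = s.ncard + t.ncard := by
    rw [symmDiff_eq_sup_sdiff_inf]
    change ((s ∪ t) \ (s ∩ t)).ncard + _ = _
    rw [Set.ncard_sdiff hsub (hs.inter_of_left t), ← Set.ncard_union_add_ncard_inter s t hs ht]
    have := Set.ncard_le_ncard hsub (hs.union ht)
    omega
  rw [← Nat.odd_add, ← hcount, Nat.odd_add]
  simp

theorem isTJoin_empty_iff {G : SimpleGraph V} {H : Set (Sym2 V)} :
    IsTJoin G ∅ H ↔ IsEvenEdgeSet G H := by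
  simp [IsTJoin, IsEvenEdgeSet]

theorem isEvenEdgeSet_empty {G : SimpleGraph V} : IsEvenEdgeSet G ∅ :=
  ⟨Set.empty_subset _, by simp⟩

theorem IsTJoin.symmDiff [Finite V] {G : SimpleGraph V} {T T' : Set V} {J J' : Set (Sym2 V)}
    (hJ : IsTJoin G T J) (hJ' : IsTJoin G T' J') : IsTJoin G (T ∆ T') (J ∆ J') := by
  refine ⟨symmDiff_le_sup.trans (Set.union_subset hJ.1 hJ'.1), fun v => ?_⟩
  rw [show {e ∈ J ∆ J' | v ∈ e} = {e ∈ J | v ∈ e} ∆ {e ∈ J' | v ∈ e} from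
      Set.inter_symmDiff_distrib_right _ _ _,
    Set.odd_ncard_symmDiff_iff (Set.toFinite _) (Set.toFinite _), hJ.2 v,
    ← Nat.not_odd_iff_even, hJ'.2 v, Set.mem_symmDiff]
  tauto

theorem IsTJoin.symmDiff_isEvenEdgeSet [Finite V] {G : SimpleGraph V} {T : Set V}
    {J H : Set (Sym2 V)} (hJ : IsTJoin G T J) (hH : IsEvenEdgeSet G H) :
    IsTJoin G T (J ∆ H) := by
  simpa only [← Set.bot_eq_empty, symmDiff_bot] using hJ.symmDiff (isTJoin_empty_iff.mpr hH)

namespace SimpleGraph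

theorem Walk.IsTrail.ncard_incident_edges [DecidableEq V] {G : SimpleGraph V} {u v : V}
    {p : G.Walk u v} (hp : p.IsTrail) (x : V) :
    {e ∈ {e | e ∈ p.edges} | x ∈ e}.ncard = p.edges.countP (x ∈ ·) := by
  rw [List.countP_eq_length_filter, ← List.toFinset_card_of_nodup (hp.edges_nodup.filter _),
    ← Set.ncard_coe_finset]
  congr 1
  ext e
  simp

theorem Walk.IsTrail.isTJoin {G : SimpleGraph V} {u v : V} {p : G.Walk u v} (hp : p.IsTrail) :
    IsTJoin G ({u} ∆ {v}) {e | e ∈ p.edges} := by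
  classical
  refine ⟨fun e he => p.edges_subset_edgeSet he, fun x => ?_⟩
  rw [hp.ncard_incident_edges, ← Nat.not_even_iff_odd, hp.even_countP_edges_iff, Set.mem_symmDiff]
  simp only [Set.mem_singleton_iff]
  grind

theorem exists_isEvenEdgeSet_mem_of_not_isBridge {G : SimpleGraph V} {e : Sym2 V}
    (he : e ∈ G.edgeSet) (hb : ¬ G.IsBridge e) : ∃ H, IsEvenEdgeSet G H ∧ e ∈ H := by
  obtain ⟨u, p, hp, hep⟩ : ∃ u, ∃ p : G.Walk u u, p.IsCycle ∧ e ∈ p.edges := by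
    simpa [isBridge_iff_forall_cycle_notMem he] using hb
  exact ⟨_, isTJoin_empty_iff.mp (by simpa using hp.isTrail.isTJoin), hep⟩

theorem Connected.exists_isTJoin [Finite V] {G : SimpleGraph V} (hG : G.Connected) {T : Set V}
    (hT : Even T.ncard) : ∃ J, IsTJoin G T J := by
  obtain ⟨n, hn⟩ := hT
  induction n generalizing T with
  | zero =>
    obtain rfl : T = ∅ := (Set.ncard_eq_zero).mp hn
    exact ⟨∅, isTJoin_empty_iff.mpr isEvenEdgeSet_empty⟩
  | succ n ih =>
    obtain ⟨u, v, hu, hv, huv⟩ := (Set.one_lt_ncard_iff).mp (by omega : 1 < T.ncard)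
    obtain ⟨p, hp⟩ := (hG.preconnected u v).exists_isPath
    have hpair : ({u} ∆ {v} : Set V) = {u, v} := by
      ext x; simp only [Set.mem_symmDiff, Set.mem_singleton_iff, Set.mem_insert_iff]; grind
    obtain ⟨J, hJ⟩ := ih (T := T ∆ ({u} ∆ {v})) (by
      rw [hpair, symmDiff_comm, symmDiff_of_le (Set.pair_subset hu hv), Set.ncard_sdiff
        (Set.pair_subset hu hv), Set.ncard_pair huv]
      omega)
    exact ⟨_, by simpa using hJ.symmDiff hp.isTrail.isTJoin⟩

theorem exists_isEvenEdgeSet_two_mul_ncard_symmDiff_le [Finite V] {G : SimpleGraph V}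
    (hb : ∀ e, ¬ G.IsBridge e) {J : Set (Sym2 V)} (hJ : J ⊆ G.edgeSet) :
    ∃ H, IsEvenEdgeSet G H ∧ 2 * (J ∆ H).ncard ≤ G.edgeSet.ncard := by
  classical
  have : Fintype V := Fintype.ofFinite V
  obtain ⟨H, hH, hle⟩ := Finset.exists_two_mul_card_symmDiff_le
    (𝓗 := {H : Finset (Sym2 V) | IsEvenEdgeSet G ↑H}) (E := G.edgeSet.toFinset) (J := J.toFinset)
    ⟨∅, by simpa using isEvenEdgeSet_empty⟩
    (fun H hH K hK => by
      simp only [Finset.mem_filter, Finset.mem_univ, true_and, Finset.coe_symmDiff] at hH hK ⊢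
      exact isTJoin_empty_iff.mp ((isTJoin_empty_iff.mpr hH).symmDiff_isEvenEdgeSet hK))
    (fun H hH => by simpa [Set.subset_toFinset] using (Finset.mem_filter.mp hH).2.1)
    (fun e he => by
      obtain ⟨H, hH, heH⟩ :=
        exists_isEvenEdgeSet_mem_of_not_isBridge (Set.mem_toFinset.mp he) (hb e)
      exact ⟨H.toFinset, by simpa using hH, by simpa using heH⟩)
    (Set.toFinset_subset_toFinset.mpr hJ)
  refine ⟨H, (Finset.mem_filter.mp hH).2, ?_⟩
  rwa [← Set.coe_toFinset J, ← Finset.coe_symmDiff, Set.ncard_coe_finset,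
    Set.ncard_eq_toFinset_card']

end SimpleGraph

/-- a 2-edge-connected graph with `|T|` even has a `T`-join `J`
with `2|J| ≤ |E(G)|`. -/
theorem stmt1 {V : Type*} [Fintype V] (G : SimpleGraph V) (hG : TwoEdgeConnected G)
    (T : Set V) (hT : Even T.ncard) :
    ∃ J : Set (Sym2 V), IsTJoin G T J ∧ 2 * J.ncard ≤ G.edgeSet.ncard := by
  obtain ⟨hconn, -, hb⟩ := hG
  obtain ⟨J, hJ⟩ := hconn.exists_isTJoin hT
  obtain ⟨H, hH, hle⟩ := exists_isEvenEdgeSet_two_mul_ncard_symmDiff_le hb hJ.1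
  exact ⟨J ∆ H, hJ.symmDiff_isEvenEdgeSet hH, hle⟩
end

section
/- Let (G,σ) be a signed graph such that G⁺ is connected and (G,σ) contains no barbell, and let e and e' be two distinct negative edges of (G,σ). Then there exists a positive cycle C of (G,σ) containing both e and e' with 2|E(C)| ≤ 2|E(G)| − |E(Ĝ⁺)|, where Ĝ⁺ is the maximal bridgeless subgraph of G⁺. -/
open SimpleGraph Set

variable {V : Type*}

/-!
Each negative edge closes a path of `G⁺` into a negative cycle, and the symmetric difference of
these two cycles is an even edge set of `G` whose only negative edges are `e` and `e'`. Adding an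
even subgraph of `Ĝ⁺` preserves this; as every edge of `Ĝ⁺` lies on a cycle of `G⁺`, it lies in
exactly half of these subgraphs, so averaging and descent give such a set `F` containing at most
half the edges of `Ĝ⁺`. With no barbell, any two negative cycles share two vertices, which lets one
extract from `F` a single cycle `C` through `e` and `e'`; it is positive, and
`2|C ∩ E(Ĝ⁺)| ≤ |E(Ĝ⁺)|` gives `2|C| + |E(Ĝ⁺)| ≤ 2|E(G)|`.
-/

open scoped symmDiff

section Counting

open Finset

variable {α : Type*} [DecidableEq α] {s : Finset α} {𝒵 : Finset (Finset α)}

theorem Finset.card_symmDiff_add_two_mul_card_inter (s t : Finset α) :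
    #(s ∆ t) + 2 * #(s ∩ t) = #s + #t := by
  rw [symmDiff_eq_sup_sdiff_inf, sup_eq_union, inf_eq_inter,
    card_sdiff_of_subset inter_subset_union, ← card_union_add_card_inter s t]
  have := card_le_card (inter_subset_union (s := s) (t := t))
  omega

theorem Finset.filter_symmDiff (p : α → Prop) [DecidablePred p] (s t : Finset α) :
    (s ∆ t).filter p = s.filter p ∆ t.filter p := by
  ext a
  simp only [mem_filter, mem_symmDiff]
  tauto

/-- `Z ↦ Z ∆ Z₀` swaps the members containing `a` with those that do not. -/
theorem Finset.two_mul_card_filter_mem_eq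
    (h𝒵 : ∀ Z₁ ∈ 𝒵, ∀ Z₂ ∈ 𝒵, Z₁ ∆ Z₂ ∈ 𝒵) {a : α} {Z₀ : Finset α} (hZ₀ : Z₀ ∈ 𝒵)
    (ha : a ∈ Z₀) : 2 * #{Z ∈ 𝒵 | a ∈ Z} = #𝒵 := by
  have hswap : #{Z ∈ 𝒵 | a ∈ Z} = #{Z ∈ 𝒵 | a ∉ Z} := by
    refine card_bij' (fun Z _ => Z ∆ Z₀) (fun Z _ => Z ∆ Z₀) ?_ ?_ ?_ ?_
    all_goals
      intro Z hZ
      simp only [mem_filter] at hZ ⊢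
    · exact ⟨h𝒵 _ hZ.1 _ hZ₀, by simp [mem_symmDiff, hZ.2, ha]⟩
    · exact ⟨h𝒵 _ hZ.1 _ hZ₀, by simp [mem_symmDiff, hZ.2, ha]⟩
    · exact symmDiff_symmDiff_cancel_right Z₀ Z
    · exact symmDiff_symmDiff_cancel_right Z₀ Z
  have := card_filter_add_card_filter_not (s := 𝒵) (fun Z => a ∈ Z)
  omega

/-- Each element of `s` lies in exactly half of the members of `𝒵`, so summing `2|A ∩ Z| ≤ |Z|`
over `𝒵` gives the claim. -/
theorem Finset.two_mul_card_le_of_symmDiff_closed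
    (h𝒵 : ∀ Z₁ ∈ 𝒵, ∀ Z₂ ∈ 𝒵, Z₁ ∆ Z₂ ∈ 𝒵) (hsub : ∀ Z ∈ 𝒵, Z ⊆ s)
    (hcover : ∀ a ∈ s, ∃ Z ∈ 𝒵, a ∈ Z) {A : Finset α} (hA : A ⊆ s)
    (hhalf : ∀ Z ∈ 𝒵, 2 * #(A ∩ Z) ≤ #Z) : 2 * #A ≤ #s := by
  obtain rfl | ⟨a, ha⟩ := s.eq_empty_or_nonempty
  · simp [subset_empty.mp hA]
  obtain ⟨Z₀, hZ₀, haZ₀⟩ := hcover a ha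
  have hcount : ∀ b ∈ s, 2 * #{Z ∈ 𝒵 | b ∈ Z} = #𝒵 := fun b hb => by
    obtain ⟨Z, hZ, hbZ⟩ := hcover b hb
    exact two_mul_card_filter_mem_eq h𝒵 hZ hbZ
  set n := #{Z ∈ 𝒵 | a ∈ Z}
  have hn : 0 < n := card_pos.mpr ⟨Z₀, mem_filter.mpr ⟨hZ₀, haZ₀⟩⟩
  have hconst : ∀ b ∈ s, #{Z ∈ 𝒵 | b ∈ Z} = n := fun b hb => by
    have := hcount b hb; have := hcount a ha; omega
  have hsumA : ∑ Z ∈ 𝒵, #(A ∩ Z) = #A * n := sum_card_inter fun b hb => hconst b (hA hb)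
  have hsums : ∑ Z ∈ 𝒵, #Z = #s * n := by
    rw [← sum_card_inter hconst]
    exact sum_congr rfl fun Z hZ => by rw [inter_eq_right.mpr (hsub Z hZ)]
  have : 2 * #A * n ≤ #s * n := by
    calc 2 * #A * n = ∑ Z ∈ 𝒵, 2 * #(A ∩ Z) := by rw [← mul_sum, hsumA, mul_assoc]
      _ ≤ ∑ Z ∈ 𝒵, #Z := sum_le_sum hhalf
      _ = #s * n := hsums
  exact Nat.le_of_mul_le_mul_right this hn

theorem Finset.two_mul_card_add_card_le {C E E₀ : Finset α}
    (hC : C ⊆ E) (hE₀ : E₀ ⊆ E) (h : 2 * #(C ∩ E₀) ≤ #E₀) : 2 * #C + #E₀ ≤ 2 * #E := by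
  have hCsplit := card_sdiff_add_card_inter C E₀
  have hEsplit := card_sdiff_add_card_inter E E₀
  rw [inter_eq_right.mpr hE₀] at hEsplit
  have := card_le_card (sdiff_subset_sdiff hC (subset_refl E₀))
  omega

end Counting

section EvenDegrees

open Finset

variable [DecidableEq V]

def EvenDegrees (F : Finset (Sym2 V)) : Prop := ∀ v, Even #{g ∈ F | v ∈ g}

theorem EvenDegrees.symmDiff {F Z : Finset (Sym2 V)} (hF : EvenDegrees F) (hZ : EvenDegrees Z) :
    EvenDegrees (F ∆ Z) := by
  intro v
  have h := card_symmDiff_add_two_mul_card_inter {g ∈ F | v ∈ g} {g ∈ Z | v ∈ g}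
  rw [← filter_symmDiff] at h
  have := hF v; have := hZ v
  rw [Nat.even_iff] at *
  omega

theorem EvenDegrees.sdiff {F Z : Finset (Sym2 V)} (hF : EvenDegrees F) (hZ : EvenDegrees Z)
    (hZF : Z ⊆ F) : EvenDegrees (F \ Z) :=
  symmDiff_of_ge hZF ▸ hF.symmDiff hZ

variable {G : SimpleGraph V}

theorem SimpleGraph.Walk.IsTrail.evenDegrees_edges {u : V} {c : G.Walk u u} (hc : c.IsTrail) :
    EvenDegrees c.edges.toFinset := fun v => by
  rw [hc.edges_nodup.card_eq_countP, hc.even_countP_edges_iff]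
  exact fun h => absurd rfl h

theorem SimpleGraph.Walk.IsTrail.card_toFinset_edges {u v : V} {q : G.Walk u v}
    (hq : q.IsTrail) : #q.edges.toFinset = q.length := by
  rw [List.toFinset_card_of_nodup hq.edges_nodup, Walk.length_edges]

theorem SimpleGraph.Walk.IsTrail.exists_mem_notMem_edges {F : Finset (Sym2 V)} {u x : V}
    {q : G.Walk u x} (hq : q.IsTrail) (hqF : ∀ g ∈ q.edges, g ∈ F)
    (hx : Even #{g ∈ F | x ∈ g} ↔ u ≠ x) : ∃ g ∈ F, x ∈ g ∧ g ∉ q.edges := by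
  by_contra! hall
  have hdeg : {g ∈ F | x ∈ g} = {g ∈ q.edges.toFinset | x ∈ g} := by
    ext g
    simp only [mem_filter, List.mem_toFinset]
    exact ⟨fun h => ⟨hall g h.1 h.2, h.2⟩, fun h => ⟨hqF g h.1, h.2⟩⟩
  rw [hdeg, hq.edges_nodup.card_eq_countP, hq.even_countP_edges_iff] at hx
  by_cases hux : u = x <;> simp_all

/-- A longest trail from `b` inside `F.erase s(a, b)` can only get stuck at `a`, the other vertex
of odd degree there. -/
theorem exists_walk_of_evenDegrees {F : Finset (Sym2 V)} (hFG : ∀ g ∈ F, g ∈ G.edgeSet)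
    (hF : EvenDegrees F) {a b : V} (hab : s(a, b) ∈ F) :
    ∃ q : G.Walk b a, ∀ g ∈ q.edges, g ∈ F.erase s(a, b) := by
  by_contra! hno
  have hlong : ∀ n, ∃ (x : V) (q : G.Walk b x), q.IsTrail ∧
      (∀ g ∈ q.edges, g ∈ F.erase s(a, b)) ∧ q.length = n := by
    intro n
    induction n with
    | zero => exact ⟨b, .nil, .nil, by simp, rfl⟩
    | succ n ih =>
      obtain ⟨x, q, hq, hqF, rfl⟩ := ih
      have hxa : x ≠ a := by
        rintro rfl
        obtain ⟨g, hg, hgF⟩ := hno q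
        exact hgF (hqF g hg)
      have hpar : Even #{g ∈ F.erase s(a, b) | x ∈ g} ↔ b ≠ x := by
        have hdeg := hF x
        by_cases hxb : x = b
        · subst hxb
          have hpos : 0 < #{g ∈ F | x ∈ g} := card_pos.mpr ⟨_, mem_filter.mpr ⟨hab, by simp⟩⟩
          rw [filter_erase, card_erase_of_mem (by simp [hab]), ne_self_iff_false, iff_false,
            Nat.not_even_iff_odd, Nat.odd_iff]
          rw [Nat.even_iff] at hdeg
          omega
        · rw [filter_erase, erase_eq_of_notMem (by simp [hxa, hxb])]
          simpa [Ne.symm hxb] using hdeg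
      obtain ⟨g, hgF, hxg, hgq⟩ := hq.exists_mem_notMem_edges hqF hpar
      obtain ⟨y, rfl⟩ := Sym2.mem_iff_exists.mp hxg
      have hxy : G.Adj x y := (G.mem_edgeSet).mp (hFG _ (mem_of_mem_erase hgF))
      refine ⟨y, q.concat hxy, ?_, ?_, by simp⟩
      · rw [Walk.isTrail_def, Walk.edges_concat, List.concat_eq_append, List.nodup_append]
        exact ⟨hq.edges_nodup, List.nodup_singleton _, by grind⟩
      · simp only [Walk.edges_concat, List.concat_eq_append, List.mem_append,
          List.mem_singleton]
        rintro g (hg | rfl)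
        exacts [hqF g hg, hgF]
  obtain ⟨x, q, hq, hqF, hlen⟩ := hlong (#(F.erase s(a, b)) + 1)
  have : q.length ≤ #(F.erase s(a, b)) := by
    rw [← hq.card_toFinset_edges]
    exact card_le_card fun g hg => hqF g (List.mem_toFinset.mp hg)
  omega

theorem exists_isCycle_of_evenDegrees {F : Finset (Sym2 V)} (hFG : ∀ g ∈ F, g ∈ G.edgeSet)
    (hF : EvenDegrees F) {f : Sym2 V} (hf : f ∈ F) :
    ∃ (r : V) (c : G.Walk r r), c.IsCycle ∧ f ∈ c.edges ∧ ∀ g ∈ c.edges, g ∈ F := by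
  obtain ⟨a, b⟩ := f
  obtain ⟨q, hqF⟩ := exists_walk_of_evenDegrees hFG hF hf
  have hpF : ∀ g ∈ q.bypass.edges, g ∈ F.erase s(a, b) :=
    fun g hg => hqF g (q.edges_bypass_subset_edges hg)
  refine ⟨a, .cons ((G.mem_edgeSet).mp (hFG _ hf)) q.bypass, ?_, by simp, ?_⟩
  · exact (Walk.cons_isCycle_iff _ _).mpr ⟨q.bypass_isPath, fun h => by simpa using hpF _ h⟩
  · simp only [Walk.edges_cons, List.mem_cons]
    rintro g (rfl | hg)
    exacts [hf, mem_of_mem_erase (hpF g hg)]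

end EvenDegrees

section Arcs

variable {G : SimpleGraph V}

theorem SimpleGraph.Walk.exists_walk_to_first_mem (S : Set V) {u v : V} (q : G.Walk u v)
    (hv : v ∈ S) : ∃ w ∈ S, ∃ p : G.Walk u w, (∀ x ∈ p.support, x ∈ S → x = w) ∧
      p.support ⊆ q.support := by
  induction q with
  | nil => exact ⟨_, hv, .nil, by simp, by simp⟩
  | @cons u _ _ h q ih =>
    by_cases hu : u ∈ S
    · exact ⟨u, hu, .nil, by simp, by simp⟩
    · obtain ⟨w, hw, p, hpS, hpq⟩ := ih hv
      refine ⟨w, hw, .cons h p, ?_, ?_⟩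
      · simp only [support_cons, List.mem_cons, forall_eq_or_imp]
        exact ⟨fun h => absurd h hu, hpS⟩
      · simpa using List.cons_subset_cons u hpq

variable [DecidableEq V]

theorem SimpleGraph.Walk.IsTrail.exists_arc {r x y : V} {c : G.Walk r r} (hc : c.IsTrail)
    (hx : x ∈ c.support) (hy : y ∈ c.support) (hxy : x ≠ y) {f : Sym2 V} (hf : f ∈ c.edges) :
    ∃ A : G.Walk x y, A.IsTrail ∧ f ∈ A.edges ∧ (∀ g ∈ A.edges, g ∈ c.edges) ∧
      A.length < c.length := by
  set c' := c.rotate x hx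
  have hc' : c'.IsTrail := (isTrail_rotate hx).mpr hc
  have hmem : ∀ g, g ∈ c'.edges ↔ g ∈ c.edges := fun g => (c.rotate_edges x hx).perm.mem_iff
  have hy' : y ∈ c'.support := (mem_support_rotate_iff ..).mpr hy
  have hsplit := c'.take_spec hy'
  have hlen : (c'.takeUntil y hy').length + (c'.dropUntil y hy').length = c.length := by
    rw [← length_append, hsplit, length_rotate]
  have htake : (c'.takeUntil y hy').length ≠ 0 := fun h => hxy (eq_of_length_eq_zero h)
  have hdrop : (c'.dropUntil y hy').length ≠ 0 := fun h => hxy (eq_of_length_eq_zero h).symm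
  have hedges : ∀ g, g ∈ (c'.takeUntil y hy').edges ∨ g ∈ (c'.dropUntil y hy').edges ↔
      g ∈ c.edges := fun g => by rw [← List.mem_append, ← edges_append, hsplit, hmem]
  rcases (hedges f).mpr hf with hf' | hf'
  · exact ⟨_, hc'.takeUntil hy', hf', fun g hg => (hedges g).mp (.inl hg), by omega⟩
  · refine ⟨_, (hc'.dropUntil hy').reverse _, by simpa using hf', fun g hg => ?_, by simp; omega⟩
    exact (hedges g).mp (.inr (by simpa using hg))

end Arcs

section Barbells

variable [DecidableEq V] {G : SimpleGraph V} {σ : Sym2 V → Bool}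

theorem SimpleGraph.Connected.nontrivial_inter_of_isNegCycle (hG : G.Connected)
    (hnb : ¬ ∃ B, IsBarbell G σ B) {C₁ C₂ : Set (Sym2 V)} {S₁ S₂ : Set V}
    (h₁ : IsNegCycle G σ C₁ S₁) (h₂ : IsNegCycle G σ C₂ S₂) : (S₁ ∩ S₂).Nontrivial := by
  by_contra hnt
  rcases (Set.not_nontrivial_iff.mp hnt).eq_empty_or_singleton with hempty | ⟨z, hz⟩
  · obtain ⟨a, ha⟩ : S₁.Nonempty := by
      obtain ⟨v, w, -, -, rfl⟩ := h₁.1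
      exact ⟨v, w.start_mem_support⟩
    obtain ⟨b, hb⟩ : S₂.Nonempty := by
      obtain ⟨v, w, -, -, rfl⟩ := h₂.1
      exact ⟨v, w.start_mem_support⟩
    obtain ⟨b', hb', p₁, hp₁S₂, -⟩ := (hG.preconnected a b).some.exists_walk_to_first_mem S₂ hb
    obtain ⟨a', ha', p₂, hp₂S₁, hp₂⟩ := p₁.reverse.exists_walk_to_first_mem S₁ ha
    have hsupp : ∀ x ∈ p₂.reverse.bypass.support, x ∈ p₂.support ∧ x ∈ p₁.support := by
      intro x hx
      have hx₂ : x ∈ p₂.support := by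
        simpa using p₂.reverse.support_bypass_subset_support hx
      exact ⟨hx₂, by simpa using hp₂ hx₂⟩
    apply hnb
    refine ⟨_, C₁, C₂, .inr ⟨S₁, S₂, a', b', p₂.reverse.bypass, h₁, h₂,
      Set.disjoint_iff_inter_eq_empty.mpr hempty, p₂.reverse.bypass_isPath, ha', hb', ?_, ?_, rfl⟩⟩
    · ext x
      simp only [Set.mem_inter_iff, Set.mem_ofPred_eq, Set.mem_singleton_iff]
      refine ⟨fun ⟨hx, hxS⟩ => hp₂S₁ x (hsupp x hx).1 hxS, ?_⟩
      rintro rfl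
      exact ⟨Walk.start_mem_support _, ha'⟩
    · ext x
      simp only [Set.mem_inter_iff, Set.mem_ofPred_eq, Set.mem_singleton_iff]
      refine ⟨fun ⟨hx, hxS⟩ => hp₁S₂ x (hsupp x hx).2 hxS, ?_⟩
      rintro rfl
      exact ⟨Walk.end_mem_support _, hb'⟩
  · exact hnb ⟨_, C₁, C₂, .inl ⟨S₁, S₂, h₁, h₂, ⟨z, hz⟩, rfl⟩⟩

end Barbells

section Signed

open Finset

variable {G : SimpleGraph V} {σ : Sym2 V → Bool}

theorem gplus_le : gplus G σ ≤ G := deleteEdges_le _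

theorem edgeSet_gplus : (gplus G σ).edgeSet = posEdgeSet G σ := by
  ext g
  simp [gplus, posEdgeSet]

theorem nonBridgeEdges_gplus_subset : nonBridgeEdges (gplus G σ) ⊆ posEdgeSet G σ :=
  edgeSet_gplus (G := G) ▸ sep_subset _ _

variable [DecidableEq V]

theorem SimpleGraph.Walk.ncard_sep_mem_edges {u v : V} (c : G.Walk u v) (p : Sym2 V → Prop)
    [DecidablePred p] : {g ∈ {g | g ∈ c.edges} | p g}.ncard = #{g ∈ c.edges.toFinset | p g} := by
  rw [← Set.ncard_coe_finset]
  congr 1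
  ext g
  simp

theorem SimpleGraph.Walk.IsCycle.isNegCycle {r : V} {c : G.Walk r r} (hc : c.IsCycle)
    (hodd : Odd #{g ∈ c.edges.toFinset | σ g = true}) :
    IsNegCycle G σ {g | g ∈ c.edges} {x | x ∈ c.support} :=
  ⟨⟨r, c, hc, rfl, rfl⟩, c.ncard_sep_mem_edges (σ · = true) ▸ hodd⟩

theorem SimpleGraph.Walk.IsCycle.isPosCycle {r : V} {c : G.Walk r r} (hc : c.IsCycle)
    (heven : Even #{g ∈ c.edges.toFinset | σ g = true}) : IsPosCycle G σ {g | g ∈ c.edges} :=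
  ⟨⟨_, r, c, hc, rfl, rfl⟩, c.ncard_sep_mem_edges (σ · = true) ▸ heven⟩

def IsEvenWithNegEdges (G : SimpleGraph V) (σ : Sym2 V → Bool) (N F : Finset (Sym2 V)) : Prop :=
  (∀ g ∈ F, g ∈ G.edgeSet) ∧ EvenDegrees F ∧ {g ∈ F | σ g = true} = N

namespace IsEvenWithNegEdges

variable {N F : Finset (Sym2 V)}

theorem filter_neg_of_subset (hF : IsEvenWithNegEdges G σ N F) {T : Finset (Sym2 V)}
    (hTF : T ⊆ F) : {g ∈ T | σ g = true} = N ∩ T := by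
  rw [← hF.2.2]
  ext g
  simp only [mem_filter, Finset.mem_inter]
  exact ⟨fun h => ⟨⟨hTF h.1, h.2⟩, h.1⟩, fun h => ⟨h.2, h.1.2⟩⟩

theorem filter_neg_eq_singleton {e e' : Sym2 V} (hF : IsEvenWithNegEdges G σ {e, e'} F)
    {T : Finset (Sym2 V)} (hTF : T ⊆ F) (he : e ∈ T) (he' : e' ∉ T) :
    {g ∈ T | σ g = true} = {e} := by
  rw [hF.filter_neg_of_subset hTF, Finset.insert_inter_of_mem he,
    Finset.singleton_inter_of_notMem he', Finset.insert_empty]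

theorem mem (hF : IsEvenWithNegEdges G σ N F) {e : Sym2 V} (he : e ∈ N) : e ∈ F := by
  rw [← hF.2.2] at he
  exact (mem_filter.mp he).1

theorem symmDiff (hF : IsEvenWithNegEdges G σ N F) {Z : Finset (Sym2 V)}
    (hZG : ∀ g ∈ Z, g ∈ posEdgeSet G σ) (hZ : EvenDegrees Z) :
    IsEvenWithNegEdges G σ N (F ∆ Z) := by
  refine ⟨fun g hg => ?_, hF.2.1.symmDiff hZ, ?_⟩
  · rcases mem_symmDiff.mp hg with ⟨hg, -⟩ | ⟨hg, -⟩
    exacts [hF.1 g hg, (hZG g hg).1]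
  · rw [filter_symmDiff, hF.2.2, filter_false_of_mem fun g hg => by simp [(hZG g hg).2],
      ← Finset.bot_eq_empty, symmDiff_bot]

end IsEvenWithNegEdges

theorem SimpleGraph.Walk.IsTrail.isEvenWithNegEdges {x : V} {T : G.Walk x x} (hT : T.IsTrail)
    {N F : Finset (Sym2 V)} (hF : IsEvenWithNegEdges G σ N F) (hTF : ∀ g ∈ T.edges, g ∈ F)
    (hNT : ∀ g ∈ N, g ∈ T.edges) : IsEvenWithNegEdges G σ N T.edges.toFinset := by
  refine ⟨fun g hg => T.edges_subset_edgeSet (List.mem_toFinset.mp hg), hT.evenDegrees_edges, ?_⟩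
  rw [hF.filter_neg_of_subset fun g hg => hTF g (List.mem_toFinset.mp hg),
    Finset.inter_eq_left.mpr fun g hg => List.mem_toFinset.mpr (hNT g hg)]

theorem SimpleGraph.Connected.exists_trail_of_isNegCycle (hG : G.Connected)
    (hnb : ¬ ∃ B, IsBarbell G σ B) {r s : V} {A : G.Walk r r} {B : G.Walk s s}
    (hA : A.IsCycle) (hB : B.IsCycle) (hAneg : Odd #{g ∈ A.edges.toFinset | σ g = true})
    (hBneg : Odd #{g ∈ B.edges.toFinset | σ g = true}) (hAB : A.edges.Disjoint B.edges)
    {e e' : Sym2 V} (he : e ∈ A.edges) (he' : e' ∈ B.edges) :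
    ∃ (x : V) (T : G.Walk x x), T.IsTrail ∧ e ∈ T.edges ∧ e' ∈ T.edges ∧
      (∀ g ∈ T.edges, g ∈ A.edges ∨ g ∈ B.edges) ∧ T.length < A.length + B.length := by
  obtain ⟨x, ⟨hxA, hxB⟩, y, ⟨hyA, hyB⟩, hxy⟩ :=
    hG.nontrivial_inter_of_isNegCycle hnb (hA.isNegCycle hAneg) (hB.isNegCycle hBneg)
  obtain ⟨P, hP, heP, hPA, hPlen⟩ := hA.isTrail.exists_arc hxA hyA hxy he
  obtain ⟨Q, hQ, he'Q, hQB, hQlen⟩ := hB.isTrail.exists_arc hyB hxB hxy.symm he'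
  refine ⟨x, P.append Q, ?_, by simp [heP], by simp [he'Q], ?_, by simp; omega⟩
  · exact (Walk.isTrail_append _ _).mpr
      ⟨hP, hQ, fun g hgP hgQ => hAB (hPA g hgP) (hQB g hgQ)⟩
  · simp only [Walk.edges_append, List.mem_append]
    rintro g (hg | hg)
    exacts [.inl (hPA g hg), .inr (hQB g hg)]

/-- Take a cycle `A` through `e` inside `F`; if it misses `e'`, a cycle `B` through `e'` inside
`F \ A` exists, `A` and `B` are negative, and an arc of each glues to a shorter closed trail
through `e` and `e'`. -/
theorem SimpleGraph.Connected.exists_isCycle_of_isEvenWithNegEdges (hG : G.Connected)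
    (hnb : ¬ ∃ B, IsBarbell G σ B) {e e' : Sym2 V} {F : Finset (Sym2 V)}
    (hF : IsEvenWithNegEdges G σ {e, e'} F) :
    ∃ (r : V) (c : G.Walk r r), c.IsCycle ∧ e ∈ c.edges ∧ e' ∈ c.edges ∧ ∀ g ∈ c.edges, g ∈ F := by
  induction hn : #F using Nat.strong_induction_on generalizing F with
  | _ n ih =>
  obtain ⟨r, A, hA, heA, hAF⟩ :=
    exists_isCycle_of_evenDegrees hF.1 hF.2.1 (hF.mem (e := e) (by simp))
  by_cases he'A : e' ∈ A.edges
  · exact ⟨r, A, hA, heA, he'A, hAF⟩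
  have hAsub : A.edges.toFinset ⊆ F := fun g hg => hAF g (List.mem_toFinset.mp hg)
  obtain ⟨s, B, hB, he'B, hBF⟩ := exists_isCycle_of_evenDegrees (F := F \ A.edges.toFinset)
    (fun g hg => hF.1 g (mem_sdiff.mp hg).1) (hF.2.1.sdiff hA.isTrail.evenDegrees_edges hAsub)
    (mem_sdiff.mpr ⟨hF.mem (e := e') (by simp), by simpa using he'A⟩)
  have hBsub : B.edges.toFinset ⊆ F \ A.edges.toFinset :=
    fun g hg => hBF g (List.mem_toFinset.mp hg)
  have hAB : A.edges.Disjoint B.edges :=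
    fun g hgA hgB => (mem_sdiff.mp (hBsub (List.mem_toFinset.mpr hgB))).2 (by simpa using hgA)
  have hAneg := hF.filter_neg_eq_singleton hAsub (by simpa using heA) (by simpa using he'A)
  have hBneg := (Finset.pair_comm e e' ▸ hF).filter_neg_eq_singleton (hBsub.trans sdiff_subset)
    (by simpa using he'B) fun h => hAB heA (by simpa using h)
  obtain ⟨x, T, hT, heT, he'T, hTAB, hTlen⟩ := hG.exists_trail_of_isNegCycle hnb hA hB
    (by simp [hAneg]) (by simp [hBneg]) hAB heA he'B
  have hTF : ∀ g ∈ T.edges, g ∈ F := fun g hg => by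
    rcases hTAB g hg with hg | hg
    exacts [hAF g hg, (mem_sdiff.mp (hBF g hg)).1]
  have hTcard : #T.edges.toFinset < n := by
    have hABF : #A.edges.toFinset + #B.edges.toFinset ≤ #F := by
      rw [← card_union_of_disjoint (disjoint_sdiff.mono_right hBsub)]
      exact card_le_card (union_subset hAsub (hBsub.trans sdiff_subset))
    rw [hT.card_toFinset_edges]
    rw [hA.isTrail.card_toFinset_edges, hB.isTrail.card_toFinset_edges] at hABF
    omega
  obtain ⟨r', c, hc, hec, he'c, hcT⟩ :=
    ih _ hTcard (hT.isEvenWithNegEdges hF hTF (by simp [heT, he'T])) rfl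
  exact ⟨r', c, hc, hec, he'c, fun g hg => hTF g (List.mem_toFinset.mp (hcT g hg))⟩

end Signed

section Bound

open Finset

variable [DecidableEq V]

theorem exists_evenDegrees_mem_of_mem_nonBridgeEdges {H : SimpleGraph V} {E₀ : Finset (Sym2 V)}
    (hE₀ : ↑E₀ = nonBridgeEdges H) {f : Sym2 V} (hf : f ∈ E₀) :
    ∃ Z ⊆ E₀, EvenDegrees Z ∧ f ∈ Z := by
  rw [← mem_coe, hE₀] at hf
  obtain ⟨u, c, hc, hfc⟩ : ∃ (u : V) (c : H.Walk u u), c.IsCycle ∧ f ∈ c.edges := by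
    by_contra! h
    exact hf.2 ((isBridge_iff_forall_cycle_notMem hf.1).mpr h)
  refine ⟨c.edges.toFinset, fun g hg => ?_, hc.isTrail.evenDegrees_edges, by simpa using hfc⟩
  rw [List.mem_toFinset] at hg
  rw [← mem_coe, hE₀]
  exact ⟨c.edges_subset_edgeSet hg, fun hb => hb.notMem_edges_of_isCycle hc hg⟩

/-- If `F` holds more than half of `E(Ĥ)`, averaging yields an even `Z ⊆ E(Ĥ)` holding more than
half of its edges in `F`, and `F ∆ Z` has fewer edges in `E(Ĥ)`. -/
theorem exists_two_mul_card_inter_nonBridgeEdges_le {H : SimpleGraph V} {E₀ : Finset (Sym2 V)}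
    (hE₀ : ↑E₀ = nonBridgeEdges H) {P : Finset (Sym2 V) → Prop}
    (hP : ∀ F Z, P F → Z ⊆ E₀ → EvenDegrees Z → P (F ∆ Z)) {F₀ : Finset (Sym2 V)}
    (hF₀ : P F₀) : ∃ F, P F ∧ 2 * #(F ∩ E₀) ≤ #E₀ := by
  classical
  induction hn : #(F₀ ∩ E₀) using Nat.strong_induction_on generalizing F₀ with
  | _ n ih =>
  by_cases hhalf : 2 * #(F₀ ∩ E₀) ≤ #E₀
  · exact ⟨F₀, hF₀, hhalf⟩
  obtain ⟨Z, hZ, hZlt⟩ : ∃ Z ∈ {Z ∈ E₀.powerset | EvenDegrees Z}, #Z < 2 * #(F₀ ∩ E₀ ∩ Z) := by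
    by_contra! h
    refine hhalf (two_mul_card_le_of_symmDiff_closed ?_ ?_ ?_ inter_subset_right h)
    · simp only [mem_filter, Finset.mem_powerset]
      exact fun Z₁ h₁ Z₂ h₂ => ⟨Finset.symmDiff_subset_union.trans (Finset.union_subset h₁.1 h₂.1),
        h₁.2.symmDiff h₂.2⟩
    · exact fun Z hZ => Finset.mem_powerset.mp (mem_filter.mp hZ).1
    · intro f hf
      obtain ⟨Z, hZE₀, hZ, hfZ⟩ := exists_evenDegrees_mem_of_mem_nonBridgeEdges hE₀ hf
      exact ⟨Z, mem_filter.mpr ⟨Finset.mem_powerset.mpr hZE₀, hZ⟩, hfZ⟩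
  obtain ⟨hZE₀, hZ⟩ := mem_filter.mp hZ
  have hswap : (F₀ ∆ Z) ∩ E₀ = (F₀ ∩ E₀) ∆ Z := by
    ext g
    have : g ∈ Z → g ∈ E₀ := fun h => Finset.mem_powerset.mp hZE₀ h
    simp only [Finset.mem_inter, Finset.mem_symmDiff]
    tauto
  have := card_symmDiff_add_two_mul_card_inter (F₀ ∩ E₀) Z
  exact ih _ (by rw [hswap]; omega) (hP _ _ hF₀ (Finset.mem_powerset.mp hZE₀) hZ) rfl

end Bound

section Start

open Finset

variable [DecidableEq V] {G : SimpleGraph V} {σ : Sym2 V → Bool}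

theorem exists_isCycle_filter_neg_eq_singleton (hpos : (gplus G σ).Connected) {e : Sym2 V}
    (he : e ∈ negEdgeSet G σ) :
    ∃ (r : V) (c : G.Walk r r), c.IsCycle ∧ {g ∈ c.edges.toFinset | σ g = true} = {e} := by
  induction e using Sym2.ind with | _ a b =>
  obtain ⟨hab, hσ⟩ := he
  rw [mem_edgeSet] at hab
  obtain ⟨p, hp, hppos⟩ : ∃ p : G.Walk b a, p.IsPath ∧ ∀ g ∈ p.edges, σ g = false := by
    obtain ⟨q, hq⟩ : ∃ q : (gplus G σ).Walk b a, q.IsPath :=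
      ⟨_, (hpos.preconnected b a).some.bypass_isPath⟩
    refine ⟨q.mapLe gplus_le, (Walk.isPath_mapLe _).mpr hq, fun g hg => ?_⟩
    rw [Walk.edges_mapLe_eq_edges] at hg
    have := q.edges_subset_edgeSet hg
    rw [edgeSet_gplus] at this
    exact this.2
  refine ⟨a, .cons hab p, (Walk.cons_isCycle_iff _ _).mpr
    ⟨hp, fun h => by simp [hppos _ h] at hσ⟩, ?_⟩
  ext g
  simp only [Walk.edges_cons, mem_filter, List.mem_toFinset, List.mem_cons, Finset.mem_singleton]
  constructor
  · rintro ⟨rfl | hg, hσg⟩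
    exacts [rfl, by simp [hppos g hg] at hσg]
  · rintro rfl
    exact ⟨.inl rfl, hσ⟩

theorem exists_isEvenWithNegEdges_pair (hpos : (gplus G σ).Connected) {e e' : Sym2 V}
    (he : e ∈ negEdgeSet G σ) (he' : e' ∈ negEdgeSet G σ) (hne : e ≠ e') :
    ∃ F, IsEvenWithNegEdges G σ {e, e'} F := by
  obtain ⟨r, c, hc, hce⟩ := exists_isCycle_filter_neg_eq_singleton hpos he
  obtain ⟨r', c', hc', hce'⟩ := exists_isCycle_filter_neg_eq_singleton hpos he'
  refine ⟨c.edges.toFinset ∆ c'.edges.toFinset, fun g hg => ?_,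
    hc.isTrail.evenDegrees_edges.symmDiff hc'.isTrail.evenDegrees_edges, ?_⟩
  · rcases Finset.mem_symmDiff.mp hg with ⟨hg, -⟩ | ⟨hg, -⟩
    exacts [c.edges_subset_edgeSet (List.mem_toFinset.mp hg),
      c'.edges_subset_edgeSet (List.mem_toFinset.mp hg)]
  · rw [filter_symmDiff, hce, hce', Finset.symmDiff_eq_union
      (Finset.disjoint_singleton.mpr hne), Finset.insert_eq]

end Start

/-- in a barbell-free signed graph with `G⁺` connected, any two distinct
negative edges lie on a common positive cycle `C` with `2|E(C)| ≤ 2|E(G)| − |E(Ĝ⁺)|`. -/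
theorem stmt10 {V : Type*} [Fintype V] (G : SimpleGraph V) (σ : Sym2 V → Bool)
    (hpos : (gplus G σ).Connected) (hnb : ¬ ∃ B : Set (Sym2 V), IsBarbell G σ B)
    (e e' : Sym2 V) (he : e ∈ negEdgeSet G σ) (he' : e' ∈ negEdgeSet G σ) (hne : e ≠ e') :
    ∃ C : Set (Sym2 V), IsPosCycle G σ C ∧ e ∈ C ∧ e' ∈ C ∧
      2 * C.ncard + (nonBridgeEdges (gplus G σ)).ncard ≤ 2 * G.edgeSet.ncard := by
  classical
  obtain ⟨E₀, hE₀⟩ : ∃ E₀ : Finset (Sym2 V), ↑E₀ = nonBridgeEdges (gplus G σ) :=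
    ⟨_, (Set.toFinite _).coe_toFinset⟩
  have hE₀pos : ∀ g ∈ E₀, g ∈ posEdgeSet G σ :=
    fun g hg => nonBridgeEdges_gplus_subset (hE₀ ▸ Finset.mem_coe.mpr hg)
  obtain ⟨F₀, hF₀⟩ := exists_isEvenWithNegEdges_pair hpos he he' hne
  obtain ⟨F, hF, hhalf⟩ := exists_two_mul_card_inter_nonBridgeEdges_le hE₀
    (fun F Z hF hZE₀ hZ => hF.symmDiff (fun g hg => hE₀pos g (hZE₀ hg)) hZ) hF₀
  obtain ⟨r, c, hc, hec, he'c, hcF⟩ :=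
    (hpos.mono gplus_le).exists_isCycle_of_isEvenWithNegEdges hnb hF
  have hcF' : c.edges.toFinset ⊆ F := fun g hg => hcF g (List.mem_toFinset.mp hg)
  have hneg : {g ∈ c.edges.toFinset | σ g = true} = {e, e'} := by
    rw [hF.filter_neg_of_subset hcF',
      Finset.inter_eq_left.mpr (by simp [Finset.insert_subset_iff, hec, he'c])]
  refine ⟨_, hc.isPosCycle (by simp [hneg, Finset.card_pair hne]), hec, he'c, ?_⟩
  rw [← List.coe_toFinset, Set.ncard_coe_finset, ← hE₀, Set.ncard_coe_finset, ← coe_edgeFinset,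
    Set.ncard_coe_finset]
  refine Finset.two_mul_card_add_card_le (fun g hg => ?_) (fun g hg => ?_) ?_
  · exact mem_edgeFinset.mpr (c.edges_subset_edgeSet (List.mem_toFinset.mp hg))
  · exact mem_edgeFinset.mpr (hE₀pos g hg).1
  · calc 2 * (c.edges.toFinset ∩ E₀).card ≤ 2 * (F ∩ E₀).card := by gcongr
      _ ≤ E₀.card := hhalf
end
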